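/- arXiv:2602.16141 — 3 statements merged into one kernel-verified Lean document; each statement's English description precedes it below -/
import Mathlib

section
/- Let Γ be a finite simple graph on V = {1,…,n}. Writing ad_X(B) = [X,B] and ad_X^3(B) = [X,[X,[X,B]]], one has ad_X^3(Z) + 16·ad_X(Z) = 0 in End(W). -/
open scoped Classical

attribute [local instance] LieRing.ofAssociativeRing

noncomputable section

/-- The Hilbert space with basis indexed by bit strings on `S`. -/
abbrev QState (S : Type*) : Type _ := (S → Bool) → ℂ

section Pauli

variable {S : Type*} [Fintype S] [DecidableEq S]

/-- Pauli `Z` operator at site `w`: `Z_w |b⟩ = (-1)^{b_w} |b⟩`. -/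
def pauliZ (w : S) : Module.End ℂ (QState S) where
  toFun g b := (if b w then (-1 : ℂ) else 1) * g b
  map_add' g h := by funext b; simp only [Pi.add_apply]; ring
  map_smul' c g := by
    funext b
    simp only [Pi.smul_apply, smul_eq_mul, RingHom.id_apply]
    ring

/-- Pauli `X` operator at site `w`: `X_w |b⟩ = |b ⊕ e_w⟩`. -/
def pauliX (w : S) : Module.End ℂ (QState S) where
  toFun g b := g (Function.update b w (!(b w)))
  map_add' g h := rfl
  map_smul' c g := rfl

/-- Pauli `Y` operator at site `w`: `Y_w = i · X_w · Z_w`. -/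
def pauliY (w : S) : Module.End ℂ (QState S) := Complex.I • (pauliX w * pauliZ w)

lemma pauliZ_mul_comm (a b : S) : pauliZ a * pauliZ b = pauliZ b * pauliZ a := by
  apply LinearMap.ext
  intro g
  funext x
  show (if x a then (-1 : ℂ) else 1) * ((if x b then (-1 : ℂ) else 1) * g x)
      = (if x b then (-1 : ℂ) else 1) * ((if x a then (-1 : ℂ) else 1) * g x)
  ring

/-- The operator `Z_w Z_{w'}` attached to an unordered pair `e = {w, w'}`. -/
def pauliZZ (e : Sym2 S) : Module.End ℂ (QState S) :=
  Sym2.lift ⟨fun a b => pauliZ a * pauliZ b, pauliZ_mul_comm⟩ e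

/-- The computational basis vector `|b⟩`. -/
def ket (b : S → Bool) : QState S := fun b' => if b' = b then 1 else 0

end Pauli

section Full

variable {V : Type*} [Fintype V] [DecidableEq V]

/-- `X := i ∑_w X_w`, the (rescaled) standard mixer Hamiltonian. -/
def Xop (V : Type*) [Fintype V] [DecidableEq V] : Module.End ℂ (QState V) :=
  Complex.I • ∑ w : V, pauliX w

/-- `Z := i ∑_{(w,w') ∈ E} Z_w Z_{w'}`, the (rescaled) MaxCut problem Hamiltonian. -/
def Zop (Γ : SimpleGraph V) : Module.End ℂ (QState V) :=
  Complex.I • ∑ e ∈ Γ.edgeFinset, pauliZZ e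

/-- The standard dynamical Lie algebra `g_{Γ,std}`. -/
def gstd (Γ : SimpleGraph V) : LieSubalgebra ℝ (Module.End ℂ (QState V)) :=
  LieSubalgebra.lieSpan ℝ _ {Xop V, Zop Γ}

/-- The free dynamical Lie algebra `g_{Γ,free}`. -/
def gfree (Γ : SimpleGraph V) : LieSubalgebra ℝ (Module.End ℂ (QState V)) :=
  LieSubalgebra.lieSpan ℝ _
    ((Set.range fun w : V => Complex.I • (pauliX w : Module.End ℂ (QState V))) ∪
     {A | ∃ a b : V, Γ.Adj a b ∧ A = Complex.I • (pauliZ a * pauliZ b)})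

end Full

section Reduced

variable {V : Type*} [Fintype V] [DecidableEq V]

/-- Pauli `X` at vertex `a` acting on the reduced space at `v` (zero if `a = v`). -/
def pauliXsub (v a : V) : Module.End ℂ (QState {w : V // w ≠ v}) :=
  if h : a = v then 0 else pauliX (⟨a, h⟩ : {w : V // w ≠ v})

/-- Pauli `Z` at vertex `a` acting on the reduced space at `v` (zero if `a = v`). -/
def pauliZsub (v a : V) : Module.End ℂ (QState {w : V // w ≠ v}) :=
  if h : a = v then 0 else pauliZ (⟨a, h⟩ : {w : V // w ≠ v})

lemma pauliZsub_mul_comm (v : V) (a b : V) :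
    pauliZsub v a * pauliZsub v b = pauliZsub v b * pauliZsub v a := by
  unfold pauliZsub
  split_ifs <;> simp [pauliZ_mul_comm]

/-- The operator `Z_w Z_{w'}` on the reduced space at `v`, for an unordered pair. -/
def pauliZZsub (v : V) (e : Sym2 V) : Module.End ℂ (QState {w : V // w ≠ v}) :=
  Sym2.lift ⟨fun a b => pauliZsub v a * pauliZsub v b, pauliZsub_mul_comm v⟩ e

/-- `𝒳 := i ∑_{w ≠ v} X_w`, the reduced mixer. -/
def Xred (v : V) : Module.End ℂ (QState {w : V // w ≠ v}) :=
  Complex.I • ∑ w : {w : V // w ≠ v}, pauliX w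

/-- `𝒵 := i ∑_{(w,w')∈E, w,w'≠v} Z_w Z_{w'} + i ∑_{(v,w)∈E} Z_w`, the reduced problem operator. -/
def Zred (Γ : SimpleGraph V) (v : V) : Module.End ℂ (QState {w : V // w ≠ v}) :=
  Complex.I • ∑ e ∈ Γ.edgeFinset.filter (fun e => v ∉ e), pauliZZsub v e
    + Complex.I • ∑ w ∈ Γ.neighborFinset v, pauliZsub v w

/-- The standard reduced dynamical Lie algebra `g^v_{Γ,std}`. -/
def gstdRed (Γ : SimpleGraph V) (v : V) :
    LieSubalgebra ℝ (Module.End ℂ (QState {w : V // w ≠ v})) :=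
  LieSubalgebra.lieSpan ℝ _ {Xred v, Zred Γ v}

/-- The free reduced dynamical Lie algebra `g^v_{Γ,free}`. -/
def gfreeRed (Γ : SimpleGraph V) (v : V) :
    LieSubalgebra ℝ (Module.End ℂ (QState {w : V // w ≠ v})) :=
  LieSubalgebra.lieSpan ℝ _
    ((Set.range fun w : {w : V // w ≠ v} =>
        Complex.I • (pauliX w : Module.End ℂ (QState {w : V // w ≠ v}))) ∪
     {A | ∃ a b : V, Γ.Adj a b ∧ a ≠ v ∧ b ≠ v ∧
        A = Complex.I • (pauliZsub v a * pauliZsub v b)} ∪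
     {A | ∃ a : V, Γ.Adj v a ∧ A = Complex.I • pauliZsub v a})

/-- The free dynamical Lie algebra `g_{Γ_v,free}` of the reduced graph (no single-site `Z`'s). -/
def gfreeRedGraph (Γ : SimpleGraph V) (v : V) :
    LieSubalgebra ℝ (Module.End ℂ (QState {w : V // w ≠ v})) :=
  LieSubalgebra.lieSpan ℝ _
    ((Set.range fun w : {w : V // w ≠ v} =>
        Complex.I • (pauliX w : Module.End ℂ (QState {w : V // w ≠ v}))) ∪
     {A | ∃ a b : V, Γ.Adj a b ∧ a ≠ v ∧ b ≠ v ∧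
        A = Complex.I • (pauliZsub v a * pauliZsub v b)})

end Reduced
section Misc

variable {V : Type*} [Fintype V] [DecidableEq V]

/-- The value of the cut determined by the assignment `x : V → Bool`. -/
def cutValue (Γ : SimpleGraph V) (x : V → Bool) : ℕ :=
  (Γ.edgeFinset.filter (fun e => ∃ a ∈ e, ∃ b ∈ e, x a ≠ x b)).card

/-- A graph is bipartite if its vertices can be split into two parts with
every edge joining the two parts. -/
def IsBipartiteGraph {W : Type*} (Γ : SimpleGraph W) : Prop :=
  ∃ f : W → Bool, ∀ a b, Γ.Adj a b → f a ≠ f b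

/-- The reduced graph `Γ_v`: the graph induced on `V ∖ {v}`. -/
def reducedGraph {W : Type*} (Γ : SimpleGraph W) (v : W) : SimpleGraph {w : W // w ≠ v} where
  Adj a b := Γ.Adj a.1 b.1
  symm := ⟨fun _ _ h => Γ.symm.symm _ _ h⟩
  loopless := ⟨fun a h => Γ.loopless.irrefl a.1 h⟩

/-- Skew-adjointness (`A* = -A`) with respect to the Hermitian inner product making the
computational basis orthonormal, expressed through matrix entries. -/
def IsSkewAdjointOp {S : Type*} [Fintype S] [DecidableEq S]
    (A : Module.End ℂ (QState S)) : Prop :=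
  ∀ b b' : S → Bool, (starRingEnd ℂ) (A (ket b) b') = - A (ket b') b

/-- The Hadamard-product vector `|h⟩ = ∑_b (∏_{w : h_w = -} (-1)^{b_w}) |b⟩`, where the sign
pattern `h : S → Bool` records a `-` as `true`. -/
def hadamardVec {S : Type*} [Fintype S] [DecidableEq S] (h : S → Bool) : QState S :=
  fun b => ∏ w ∈ Finset.univ.filter (fun w => h w), (if b w then (-1 : ℂ) else 1)

/-- The balance of a bit string on the indices `ι 0, …, ι (m-1)`: the number of `0`'s minus the
number of `1`'s among those positions. -/
def balance {S : Type*} [Fintype S] {m : ℕ} (ι : Fin m → S) (b : S → Bool) : ℤ :=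
  ((Finset.univ.filter (fun j : Fin m => b (ι j) = false)).card : ℤ)
    - ((Finset.univ.filter (fun j : Fin m => b (ι j) = true)).card : ℤ)

/-- `C^v_{j,a}`: vertices at distance `j` from `v` reachable from `v` by a path (walk of length
`j`, necessarily a shortest path) whose intermediate degree parities follow `a`. -/
def Cset (Γ : SimpleGraph V) (v : V) (j : ℕ) (a : Fin j → ZMod 2) : Set V :=
  {w | Γ.dist v w = j ∧
    ∃ p : Γ.Walk v w, p.length = j ∧
      ∀ s : Fin j, (Γ.degree (p.getVert (s.1 + 1)) : ZMod 2) = a s}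

/-- `C^v_{j,ℓ,a}`: vertices `w` at distance `j` from `v` admitting a (distance-increasing) path of
length `ℓ` to some `w'` at distance `j + ℓ`, with degree parities along it following `a`. -/
def Cset2 (Γ : SimpleGraph V) (v : V) (j ℓ : ℕ) (a : Fin ℓ → ZMod 2) : Set V :=
  {w | Γ.dist v w = j ∧
    ∃ w' : V, Γ.dist v w' = j + ℓ ∧
      ∃ p : Γ.Walk w w', p.length = ℓ ∧
        ∀ s : Fin ℓ, (Γ.degree (p.getVert (s.1 + 1)) : ZMod 2) = a s}

end Misc

/-- The `k`-armed spider graph `O_{m_1,…,m_k}`: a central vertex `none`, with `k` paths attached;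
`some ⟨j, s⟩` is the `(s+1)`-st vertex `u_{j,s+1}` of the `j`-th arm. -/
def spider (k : ℕ) (m : Fin k → ℕ) : SimpleGraph (Option (Σ j : Fin k, Fin (m j))) :=
  SimpleGraph.fromRel (fun x y =>
    (∃ (j : Fin k) (s : Fin (m j)), s.1 = 0 ∧ x = none ∧ y = some ⟨j, s⟩) ∨
    (∃ (j : Fin k) (s t : Fin (m j)), t.1 = s.1 + 1 ∧ x = some ⟨j, s⟩ ∧ y = some ⟨j, t⟩))

/-!
Each edge term `D = Z_a Z_b` commutes with `X_w` for `w ∉ {a, b}` and anticommutes with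
`x = X_a` and `y = X_b`, so only `x + y` acts on it. As `x`, `y` are commuting involutions,
`ad_x` and `ad_y` commute and both square to `4` on everything generated from `D`, whence
`ad_{x+y}³ = ad_x³ + 3 ad_x² ad_y + 3 ad_x ad_y² + ad_y³ = 16 ad_{x+y}` on `D`.
The factors `i` in `X` and `Z` contribute `i⁴ = 1` and `i² = -1`.
-/

section AnticommutingInvolutions

variable {R : Type*} [Ring R] {x y D M N : R}

lemma mul_anticommute_of_commute_right (hM : M * x = -(x * M)) (hN : Commute x N) :
    (M * N) * x = -(x * (M * N)) := by
  rw [mul_assoc, ← hN.eq, ← mul_assoc, hM, neg_mul, mul_assoc]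

lemma mul_anticommute_of_commute_left (hM : M * x = -(x * M)) (hN : Commute x N) :
    (N * M) * x = -(x * (N * M)) := by
  rw [mul_assoc, hM, mul_neg, ← mul_assoc, ← hN.eq, mul_assoc]

lemma lie_anticommute_of_commute (hM : M * x = -(x * M)) (hxy : Commute x y) :
    ⁅y, M⁆ * x = -(x * ⁅y, M⁆) := by
  rw [Ring.lie_def, sub_mul, mul_anticommute_of_commute_left hM hxy,
    mul_anticommute_of_commute_right hM hxy, mul_sub, neg_sub_neg, neg_sub]

lemma lie_lie_of_mul_self_eq_one (hx : x * x = 1) (hM : M * x = -(x * M)) :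
    ⁅x, ⁅x, M⁆⁆ = 4 • M := by
  have hxM : ⁅x, M⁆ = 2 • (x * M) := by rw [Ring.lie_def, hM, sub_neg_eq_add, two_nsmul]
  have hxxM : ⁅x, x * M⁆ = 2 • M := by
    rw [Ring.lie_def, ← mul_assoc, hx, one_mul, mul_assoc, hM, mul_neg, ← mul_assoc, hx,
      one_mul, sub_neg_eq_add, two_nsmul]
  rw [hxM, lie_nsmul, hxxM, smul_smul]
  norm_num

theorem ad_add_cube_eq_sixteen_ad_of_anticommute (hx : x * x = 1) (hy : y * y = 1)
    (hxy : Commute x y) (hDx : D * x = -(x * D)) (hDy : D * y = -(y * D)) :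
    ⁅x + y, ⁅x + y, ⁅x + y, D⁆⁆⁆ = 16 • ⁅x + y, D⁆ := by
  have hswap : ⁅x, ⁅y, D⁆⁆ = ⁅y, ⁅x, D⁆⁆ := by
    rw [leibniz_lie, commute_iff_lie_eq.mp hxy, zero_lie, zero_add]
  have hxx := lie_lie_of_mul_self_eq_one hx hDx
  have hyy := lie_lie_of_mul_self_eq_one hy hDy
  have hxyx : ⁅x, ⁅y, ⁅x, D⁆⁆⁆ = 4 • ⁅y, D⁆ := by
    rw [← hswap, lie_lie_of_mul_self_eq_one hx (lie_anticommute_of_commute hDx hxy)]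
  have hyxy : ⁅y, ⁅y, ⁅x, D⁆⁆⁆ = 4 • ⁅x, D⁆ :=
    lie_lie_of_mul_self_eq_one hy (lie_anticommute_of_commute hDy hxy.symm)
  simp only [add_lie, lie_add, hswap, hxx, hyy, hxyx, hyxy, lie_nsmul]
  abel

end AnticommutingInvolutions

section LieRing

variable {L : Type*} [LieRing L] {r s M : L}

lemma lie_add_of_lie_eq_zero (hrM : ⁅r, M⁆ = 0) : ⁅s + r, M⁆ = ⁅s, M⁆ := by
  rw [add_lie, hrM, add_zero]

lemma lie_lie_eq_zero_of_lie_eq_zero (hrs : ⁅r, s⁆ = 0) (hrM : ⁅r, M⁆ = 0) :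
    ⁅r, ⁅s, M⁆⁆ = 0 := by
  rw [leibniz_lie, hrs, hrM, zero_lie, lie_zero, add_zero]

lemma ad_add_cube_of_lie_eq_zero (hrs : ⁅r, s⁆ = 0) (hrM : ⁅r, M⁆ = 0) :
    ⁅s + r, ⁅s + r, ⁅s + r, M⁆⁆⁆ = ⁅s, ⁅s, ⁅s, M⁆⁆⁆ := by
  have hr₁ := lie_lie_eq_zero_of_lie_eq_zero hrs hrM
  rw [lie_add_of_lie_eq_zero hrM, lie_add_of_lie_eq_zero hr₁,
    lie_add_of_lie_eq_zero (lie_lie_eq_zero_of_lie_eq_zero hrs hr₁)]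

end LieRing

section Pauli

variable {S : Type*} [DecidableEq S]

lemma pauliX_mul_self (w : S) : pauliX w * pauliX w = 1 := by
  refine LinearMap.ext fun g => funext fun b => ?_
  show g _ = g b
  rw [Function.update_idem, Function.update_self, Bool.not_not, Function.update_eq_self]

lemma pauliX_commute (v w : S) : Commute (pauliX v) (pauliX w) := by
  by_cases h : v = w
  · rw [h]
  · refine LinearMap.ext fun g => funext fun b => ?_
    show g _ = g _
    rw [Function.update_of_ne h, Function.update_of_ne (Ne.symm h), Function.update_comm h]

lemma pauliX_commute_pauliZ {v w : S} (h : v ≠ w) : Commute (pauliX v) (pauliZ w) := by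
  refine LinearMap.ext fun g => funext fun b => ?_
  show (if Function.update b v (!(b v)) w then (-1 : ℂ) else 1) * g _
      = (if b w then (-1 : ℂ) else 1) * g _
  rw [Function.update_of_ne (Ne.symm h)]

lemma pauliZ_mul_pauliX_self (w : S) : pauliZ w * pauliX w = -(pauliX w * pauliZ w) := by
  refine LinearMap.ext fun g => funext fun b => ?_
  show (if b w then (-1 : ℂ) else 1) * g _
      = -((if Function.update b w (!(b w)) w then (-1 : ℂ) else 1) * g _)
  rw [Function.update_self]
  cases b w <;> simp

lemma ad_sum_pauliX_cube_pauliZ_mul_pauliZ [Fintype S] {a b : S} (hab : a ≠ b) :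
    ⁅∑ w : S, pauliX w, ⁅∑ w : S, pauliX w, ⁅∑ w : S, pauliX w, pauliZ a * pauliZ b⁆⁆⁆
      = 16 • ⁅∑ w : S, pauliX w, pauliZ a * pauliZ b⁆ := by
  obtain ⟨r, hsum, hrs, hrD⟩ : ∃ r, ∑ w : S, pauliX w = (pauliX a + pauliX b) + r ∧
      Commute r (pauliX a + pauliX b) ∧ Commute r (pauliZ a * pauliZ b) := by
    refine ⟨∑ w ∈ (Finset.univ.erase a).erase b, pauliX w, ?_, ?_, ?_⟩
    · rw [← Finset.add_sum_erase _ _ (Finset.mem_univ a),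
        ← Finset.add_sum_erase _ _ (Finset.mem_erase.2 ⟨hab.symm, Finset.mem_univ b⟩), add_assoc]
    · exact Commute.sum_left _ _ _ fun w _ => (pauliX_commute w a).add_right (pauliX_commute w b)
    · refine Commute.sum_left _ _ _ fun w hw => ?_
      obtain ⟨hwb, hwa⟩ : w ≠ b ∧ w ≠ a := by simpa using hw
      exact (pauliX_commute_pauliZ hwa).mul_right (pauliX_commute_pauliZ hwb)
  have hDa : pauliZ a * pauliZ b * pauliX a = -(pauliX a * (pauliZ a * pauliZ b)) :=
    mul_anticommute_of_commute_right (pauliZ_mul_pauliX_self a) (pauliX_commute_pauliZ hab)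
  have hDb : pauliZ a * pauliZ b * pauliX b = -(pauliX b * (pauliZ a * pauliZ b)) :=
    mul_anticommute_of_commute_left (pauliZ_mul_pauliX_self b) (pauliX_commute_pauliZ hab.symm)
  rw [hsum, ad_add_cube_of_lie_eq_zero (commute_iff_lie_eq.mp hrs)
      (commute_iff_lie_eq.mp hrD),
    lie_add_of_lie_eq_zero (commute_iff_lie_eq.mp hrD)]
  exact ad_add_cube_eq_sixteen_ad_of_anticommute (pauliX_mul_self a) (pauliX_mul_self b)
    (pauliX_commute a b) hDa hDb

end Pauli

theorem ad_Xop_cube_add_sixteen_ad_Xop_Zop {V : Type*} [Fintype V] [DecidableEq V]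
    (Γ : SimpleGraph V) :
    ⁅Xop V, ⁅Xop V, ⁅Xop V, Zop Γ⁆⁆⁆ + (16 : ℂ) • ⁅Xop V, Zop Γ⁆ = 0 := by
  have hedges : ⁅∑ w : V, pauliX w, ⁅∑ w : V, pauliX w,
        ⁅∑ w : V, pauliX w, ∑ e ∈ Γ.edgeFinset, pauliZZ e⁆⁆⁆
      = 16 • ⁅∑ w : V, pauliX w, ∑ e ∈ Γ.edgeFinset, pauliZZ e⁆ := by
    simp only [lie_sum, Finset.smul_sum]
    refine Finset.sum_congr rfl fun e he => ?_
    induction e using Sym2.ind with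
    | _ a b => exact ad_sum_pauliX_cube_pauliZ_mul_pauliZ (Γ.ne_of_adj (by simpa using he))
  simp only [Xop, Zop, smul_lie (L := Module.End ℂ (QState V)) (M := Module.End ℂ (QState V)),
    lie_smul (L := Module.End ℂ (QState V)) (M := Module.End ℂ (QState V)), hedges, smul_smul]
  match_scalars
  linear_combination 16 * Complex.I * Complex.I * Complex.I_mul_I

theorem stmt1_general (n : ℕ) (Γ : SimpleGraph (Fin n)) :
    ⁅Xop (Fin n), ⁅Xop (Fin n), ⁅Xop (Fin n), Zop Γ⁆⁆⁆
      + (16 : ℂ) • ⁅Xop (Fin n), Zop Γ⁆ = 0 :=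
  ad_Xop_cube_add_sixteen_ad_Xop_Zop Γ

/-- `ad_X^3(Z) + 16 · ad_X(Z) = 0`. -/
theorem stmt1 (n : ℕ) (hn : 1 ≤ n) (Γ : SimpleGraph (Fin n)) :
    ⁅Xop (Fin n), ⁅Xop (Fin n), ⁅Xop (Fin n), Zop Γ⁆⁆⁆
      + (16 : ℂ) • ⁅Xop (Fin n), Zop Γ⁆ = 0 :=
  stmt1_general n Γ
end
end

section
/- Let Γ be a connected finite simple graph on V = {1,…,n}. Then: (1) W = W_even ⊕ W_odd; (2) dim_ℂ W_even = dim_ℂ W_odd = 2^{n−1}; (3) both W_even and W_odd are invariant under every element of g_{Γ,free}; (4) each is an irreducible representation: every complex subspace U ⊆ W_even (respectively U ⊆ W_odd) satisfying A(U) ⊆ U for all A ∈ g_{Γ,free} equals {0} or the whole of W_even (respectively W_odd). -/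
open scoped Classical

noncomputable section

attribute [local instance 100] LieRing.ofAssociativeRing

/-- `W_even`: the span of the Hadamard vectors with an even number of `-` factors. -/
def Weven (n : ℕ) : Submodule ℂ (QState (Fin n)) :=
  Submodule.span ℂ {g | ∃ h : Fin n → Bool,
    Even (Finset.univ.filter (fun w => h w)).card ∧ g = hadamardVec h}

/-- `W_odd`: the span of the Hadamard vectors with an odd number of `-` factors. -/
def Wodd (n : ℕ) : Submodule ℂ (QState (Fin n)) :=
  Submodule.span ℂ {g | ∃ h : Fin n → Bool,
    Odd (Finset.univ.filter (fun w => h w)).card ∧ g = hadamardVec h}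

/-!
The Hadamard vectors `|h⟩` are the characters of `(ℤ/2)ⁿ`, hence an orthogonal basis of `W`;
`W_even` and `W_odd` are spanned by complementary halves of it, and flipping one sign is a
bijection between the halves. In this basis `X_w |h⟩ = ±|h⟩` and `Z_w |h⟩ = |h ⊕ e_w⟩`, so the
generators of `g_{Γ,free}` preserve the parity of `h`. For irreducibility, the product of the
operators `(1 ± X_w)/2` projects onto a single `|h₀⟩`, so a nonzero invariant subspace contains
some `|h₀⟩`; the operators `Z_a Z_b` along a path of the connected graph `Γ` then flip any two
signs of `h₀`, and such double flips reach every sign pattern of the same parity.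
-/

open Finset
open scoped symmDiff

def boolSign (t : Bool) : ℂ := if t then -1 else 1

lemma boolSign_xor (s t : Bool) : boolSign (xor s t) = boolSign s * boolSign t := by
  cases s <;> cases t <;> simp [boolSign]

def siteIndicator {S : Type*} [DecidableEq S] (x : S) : S → Bool := fun w => decide (w = x)

lemma update_not_eq_symmDiff {S : Type*} [DecidableEq S] (b : S → Bool) (x : S) :
    Function.update b x (!b x) = b ∆ siteIndicator x := by
  funext w
  by_cases hw : w = x
  · subst hw; simp [Pi.symmDiff_apply, Bool.symmDiff_eq_xor, siteIndicator]
  · simp [Pi.symmDiff_apply, Bool.symmDiff_eq_xor, siteIndicator, hw]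

section Hadamard

variable {S : Type*} [Fintype S] [DecidableEq S]

lemma hadamardVec_apply (h b : S → Bool) : hadamardVec h b = ∏ w, boolSign (h w && b w) := by
  rw [hadamardVec, prod_filter]
  refine prod_congr rfl fun w _ => ?_
  cases h w <;> simp [boolSign]

lemma hadamardVec_comm (h b : S → Bool) : hadamardVec h b = hadamardVec b h := by
  simp only [hadamardVec_apply, Bool.and_comm]

lemma hadamardVec_symmDiff (h h' : S → Bool) :
    hadamardVec (h ∆ h') = hadamardVec h * hadamardVec h' := by
  funext b
  simp only [Pi.mul_apply, hadamardVec_apply, ← prod_mul_distrib, Pi.symmDiff_apply,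
    Bool.symmDiff_eq_xor, Bool.and_xor_distrib_right, boolSign_xor]

lemma hadamardVec_siteIndicator (x : S) (b : S → Bool) :
    hadamardVec (siteIndicator x) b = boolSign (b x) := by
  simp [hadamardVec, siteIndicator, filter_eq', boolSign]

lemma pauliX_hadamardVec (x : S) (h : S → Bool) :
    pauliX x (hadamardVec h) = boolSign (h x) • hadamardVec h := by
  funext b
  change hadamardVec h (Function.update b x (!b x)) = boolSign (h x) * hadamardVec h b
  rw [update_not_eq_symmDiff, hadamardVec_comm, hadamardVec_symmDiff, Pi.mul_apply,
    hadamardVec_siteIndicator, hadamardVec_comm, mul_comm]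

lemma pauliZ_hadamardVec (x : S) (h : S → Bool) :
    pauliZ x (hadamardVec h) = hadamardVec (h ∆ siteIndicator x) := by
  funext b
  change boolSign (b x) * hadamardVec h b = _
  rw [hadamardVec_symmDiff, Pi.mul_apply, hadamardVec_siteIndicator, mul_comm]

lemma pauliZ_mul_pauliZ_hadamardVec (a b : S) (h : S → Bool) :
    (pauliZ a * pauliZ b) (hadamardVec h) =
      hadamardVec (h ∆ siteIndicator b ∆ siteIndicator a) := by
  rw [Module.End.mul_apply, pauliZ_hadamardVec, pauliZ_hadamardVec]

lemma sum_hadamardVec (h : S → Bool) :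
    ∑ b, hadamardVec h b = if h = ⊥ then (2 : ℂ) ^ Fintype.card S else 0 := by
  have hfactor : ∀ w, ∑ t : Bool, boolSign (h w && t) = if h w = false then 2 else 0 := by
    intro w; cases h w <;> norm_num [boolSign]
  calc ∑ b, hadamardVec h b = ∏ w, ∑ t : Bool, boolSign (h w && t) := by
        simp only [hadamardVec_apply, Fintype.prod_sum]
    _ = _ := by
        simp only [hfactor, Fintype.prod_ite_zero, prod_const, card_univ, funext_iff,
          Pi.bot_apply, bot_eq_false]

lemma hadamardVec_dotProduct (h h' : S → Bool) :
    hadamardVec h ⬝ᵥ hadamardVec h' = if h = h' then (2 : ℂ) ^ Fintype.card S else 0 := by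
  simp only [dotProduct, ← Pi.mul_apply, ← hadamardVec_symmDiff, sum_hadamardVec,
    symmDiff_eq_bot]

lemma linearIndependent_hadamardVec : LinearIndependent ℂ (hadamardVec (S := S)) := by
  refine Fintype.linearIndependent_iff.2 fun g hg h₀ => ?_
  have := congrArg (hadamardVec h₀ ⬝ᵥ ·) hg
  simpa [dotProduct_sum, dotProduct_smul, hadamardVec_dotProduct] using this

lemma span_range_hadamardVec : Submodule.span ℂ (Set.range (hadamardVec (S := S))) = ⊤ :=
  linearIndependent_hadamardVec.span_eq_top_of_card_eq_finrank'
    (Module.finrank_fintype_fun_eq_card ℂ).symm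

def hadamardBasis : Module.Basis (S → Bool) ℂ (QState S) :=
  .mk linearIndependent_hadamardVec span_range_hadamardVec.ge

@[simp]
lemma hadamardBasis_apply (h : S → Bool) : hadamardBasis h = hadamardVec h :=
  Module.Basis.mk_apply _ _ _

end Hadamard

section Parity

variable {S : Type*} [Fintype S]

def parity (h : S → Bool) : ZMod 2 := (univ.filter fun w => h w).card

lemma parity_symmDiff (h h' : S → Bool) : parity (h ∆ h') = parity h + parity h' := by
  simp only [parity, natCast_card_filter, ← sum_add_distrib]
  refine sum_congr rfl fun w _ => ?_
  rw [Pi.symmDiff_apply, Bool.symmDiff_eq_xor]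
  cases h w <;> cases h' w <;> decide

variable [DecidableEq S]

lemma parity_siteIndicator (x : S) : parity (siteIndicator x) = 1 := by
  simp [parity, siteIndicator, filter_eq']

lemma parity_symmDiff_siteIndicator_pair (h : S → Bool) (a b : S) :
    parity (h ∆ siteIndicator a ∆ siteIndicator b) = parity h := by
  simp only [parity_symmDiff, parity_siteIndicator, add_assoc, CharTwo.add_self_eq_zero,
    add_zero]

lemma card_parity_eq [Nonempty S] (c : ZMod 2) :
    Fintype.card {h : S → Bool // parity h = c} = 2 ^ (Fintype.card S - 1) := by
  obtain ⟨x⟩ := ‹Nonempty S›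
  have hne : ∀ p : ZMod 2, p = c + 1 ↔ ¬p = c := by revert c; decide
  have hflip : Fintype.card {h : S → Bool // parity h = c} =
      Fintype.card {h : S → Bool // parity h = c + 1} :=
    Fintype.card_congr <| Equiv.subtypeEquiv
      ((symmDiff_left_involutive (siteIndicator x)).toPerm _)
      fun h => by simp [parity_symmDiff, parity_siteIndicator]
  have hcompl : Fintype.card {h : S → Bool // parity h = c + 1} =
      Fintype.card (S → Bool) - Fintype.card {h : S → Bool // parity h = c} := by
    rw [← Fintype.card_subtype_compl]
    exact Fintype.card_congr (Equiv.subtypeEquivRight fun h => hne _)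
  have hle := Fintype.card_subtype_le fun h : S → Bool => parity h = c
  have hpow : 2 ^ Fintype.card S = 2 * 2 ^ (Fintype.card S - 1) := by
    rw [← pow_succ', Nat.sub_add_cancel Fintype.card_pos]
  rw [Fintype.card_fun, Fintype.card_bool] at hcompl hle
  omega

def paritySubspace (S : Type*) [Fintype S] [DecidableEq S] (c : ZMod 2) :
    Submodule ℂ (QState S) :=
  Submodule.span ℂ (hadamardVec '' {h | parity h = c})

lemma isCompl_paritySubspace : IsCompl (paritySubspace S 0) (paritySubspace S 1) := by
  have hcompl : {h : S → Bool | parity h = 1} = {h | parity h = 0}ᶜ := by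
    ext h; simp only [Set.mem_ofPred_eq, Set.mem_compl_iff]
    generalize parity h = p; revert p; decide
  rw [paritySubspace, paritySubspace, hcompl]
  exact linearIndependent_hadamardVec.isCompl_span_image span_range_hadamardVec isCompl_compl

lemma finrank_paritySubspace [Nonempty S] (c : ZMod 2) :
    Module.finrank ℂ (paritySubspace S c) = 2 ^ (Fintype.card S - 1) := by
  rw [paritySubspace, Set.image_eq_range, ← card_parity_eq c]
  exact finrank_span_eq_card (linearIndependent_hadamardVec.comp _ Subtype.val_injective)

lemma Weven_eq_paritySubspace (n : ℕ) : Weven n = paritySubspace (Fin n) 0 := by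
  simp only [Weven, paritySubspace, parity, ZMod.natCast_eq_zero_iff_even, Set.image,
    Set.mem_ofPred_eq, @eq_comm _ _ (hadamardVec _)]

lemma Wodd_eq_paritySubspace (n : ℕ) : Wodd n = paritySubspace (Fin n) 1 := by
  simp only [Wodd, paritySubspace, parity, ZMod.natCast_eq_one_iff_odd, Set.image,
    Set.mem_ofPred_eq, @eq_comm _ _ (hadamardVec _)]

end Parity

def lieStabilizer {M : Type*} [AddCommGroup M] [Module ℂ M] (U : Submodule ℂ M) :
    LieSubalgebra ℝ (Module.End ℂ M) where
  carrier := {A | ∀ x ∈ U, A x ∈ U}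
  add_mem' hA hB x hx := U.add_mem (hA x hx) (hB x hx)
  zero_mem' _ _ := U.zero_mem
  smul_mem' r _ hA x hx := U.smul_of_tower_mem r (hA x hx)
  lie_mem' {A B} hA hB x hx := by
    rw [LieRing.of_associative_ring_bracket, LinearMap.sub_apply, Module.End.mul_apply,
      Module.End.mul_apply]
    exact U.sub_mem (hA _ (hB x hx)) (hB _ (hA x hx))

section Invariance

variable {S : Type*} [Fintype S] [DecidableEq S]

lemma mem_lieStabilizer_paritySubspace {A : Module.End ℂ (QState S)} {c : ZMod 2}
    (hA : ∀ h, parity h = c → A (hadamardVec h) ∈ paritySubspace S c) :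
    A ∈ lieStabilizer (paritySubspace S c) := fun _ hx =>
  (Submodule.span_le (p := (paritySubspace S c).comap A)).2
    (by rintro _ ⟨h, hh, rfl⟩; exact hA h hh) hx

lemma gfree_le_lieStabilizer_paritySubspace (Γ : SimpleGraph S) (c : ZMod 2) :
    gfree Γ ≤ lieStabilizer (paritySubspace S c) := by
  rw [gfree, LieSubalgebra.lieSpan_le]
  rintro A (⟨w, rfl⟩ | ⟨a, b, -, rfl⟩) <;>
    refine mem_lieStabilizer_paritySubspace fun h hh => Submodule.smul_mem _ _ ?_
  · rw [pauliX_hadamardVec]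
    exact Submodule.smul_mem _ _ (Submodule.subset_span ⟨h, hh, rfl⟩)
  · rw [pauliZ_mul_pauliZ_hadamardVec]
    exact Submodule.subset_span ⟨_, (parity_symmDiff_siteIndicator_pair h b a).trans hh, rfl⟩

end Invariance

lemma symmDiff_siteIndicator_mem_of_walk {V : Type*} [DecidableEq V] {Γ : SimpleGraph V}
    {A : Set (V → Bool)}
    (hA : ∀ a b, Γ.Adj a b → ∀ h ∈ A, h ∆ siteIndicator a ∆ siteIndicator b ∈ A)
    {x y : V} (p : Γ.Walk x y) : ∀ h ∈ A, h ∆ siteIndicator x ∆ siteIndicator y ∈ A := by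
  induction p with
  | nil => intro h hh; rwa [symmDiff_symmDiff_cancel_right]
  | cons hadj _ ih =>
    intro h hh
    simpa only [symmDiff_symmDiff_cancel_right] using ih _ (hA _ _ hadj h hh)

section Irreducibility

variable {S : Type*} [Fintype S] [DecidableEq S]

lemma repr_smul_hadamardVec_mem {U : Submodule ℂ (QState S)}
    (hX : ∀ w, ∀ x ∈ U, pauliX w x ∈ U) {u : QState S} (hu : u ∈ U) (h₀ : S → Bool) :
    hadamardBasis.repr u h₀ • hadamardVec h₀ ∈ U := by
  have hfilter : ∀ T : Finset S, ∑ h, ((∏ w ∈ T, if h w = h₀ w then (1 : ℂ) else 0) *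
      hadamardBasis.repr u h) • hadamardVec h ∈ U := by
    intro T
    induction T using Finset.induction_on with
    | empty =>
      simpa only [prod_empty, one_mul, ← hadamardBasis_apply, hadamardBasis.sum_repr] using hu
    | insert a T haT ih =>
      -- `(1 + s X_a)/2`, with `s` the sign of `h₀ a`, keeps exactly the components with
      -- `h a = h₀ a`.
      convert U.smul_mem (2⁻¹ : ℂ)
        (U.add_mem ih (U.smul_mem (boolSign (h₀ a)) (hX a _ ih))) using 1
      simp only [map_sum, map_smul, pauliX_hadamardVec, smul_sum, smul_smul,
        ← sum_add_distrib, ← add_smul]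
      refine sum_congr rfl fun h _ => ?_
      rw [prod_insert haT]
      congr 1
      cases h a <;> cases h₀ a <;> simp [boolSign] <;> ring
  simpa [Fintype.prod_boole, ← funext_iff] using hfilter univ

lemma mem_of_parity_eq_of_symmDiff_pair_mem {A : Set (S → Bool)}
    (hA : ∀ a b, ∀ h ∈ A, h ∆ siteIndicator a ∆ siteIndicator b ∈ A) {h₀ h : S → Bool}
    (h₀A : h₀ ∈ A) (hh : parity h = parity h₀) : h ∈ A := by
  -- Induction on a set outside which `h` agrees with `h₀`; a pattern of the other parity is one
  -- sign flip away from `A`.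
  suffices key : ∀ T : Finset S, ∀ h, (∀ w ∉ T, h w = h₀ w) →
      (parity h = parity h₀ → h ∈ A) ∧
        (parity h = parity h₀ + 1 → ∀ x, h ∆ siteIndicator x ∈ A) from
    (key univ h (by simp)).1 hh
  intro T
  induction T using Finset.induction_on with
  | empty =>
    intro h hT
    obtain rfl : h = h₀ := funext fun w => hT w (notMem_empty w)
    exact ⟨fun _ => h₀A, fun hp => absurd hp (by simp)⟩
  | insert a T haT ih =>
    intro h hT
    by_cases ha : h a = h₀ a
    · refine ih h fun w hw => ?_
      by_cases hwa : w = a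
      · rwa [hwa]
      · exact hT w (by simp [hwa, hw])
    set h' := h ∆ siteIndicator a
    have hh' : h = h' ∆ siteIndicator a := (symmDiff_symmDiff_cancel_right _ _).symm
    have hpar : parity h = parity h' + 1 := by rw [hh', parity_symmDiff, parity_siteIndicator]
    obtain ⟨ih₀, ih₁⟩ := ih h' fun w hw => by
      by_cases hwa : w = a
      · subst hwa
        simp only [h', Pi.symmDiff_apply, Bool.symmDiff_eq_xor, siteIndicator, decide_true,
          Bool.xor_true]
        revert ha; cases h w <;> cases h₀ w <;> decide
      · simpa [h', Bool.symmDiff_eq_xor, siteIndicator, hwa] using hT w (by simp [hwa, hw])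
    refine ⟨fun hp => hh' ▸ ih₁ ?_ a, fun hp x => ?_⟩
    · rwa [hpar, CharTwo.add_eq_iff_eq_add] at hp
    · simpa only [← hh'] using hA a x h' (ih₀ (by rwa [hpar, add_left_inj] at hp))

theorem paritySubspace_eq_bot_or_eq {Γ : SimpleGraph S} (hconn : Γ.Connected) {c : ZMod 2}
    {U : Submodule ℂ (QState S)} (hle : U ≤ paritySubspace S c)
    (hinv : ∀ A ∈ gfree Γ, ∀ x ∈ U, A x ∈ U) : U = ⊥ ∨ U = paritySubspace S c := by
  refine or_iff_not_imp_left.2 fun hU => le_antisymm hle ?_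
  have hgen : ∀ A, Complex.I • A ∈ gfree Γ → ∀ x ∈ U, A x ∈ U := fun A hA x hx =>
    (U.smul_mem_iff Complex.I_ne_zero).1 (hinv _ hA x hx)
  obtain ⟨u, hu, hu0⟩ := Submodule.exists_mem_ne_zero_of_ne_bot hU
  obtain ⟨h₀, hh₀⟩ : ∃ h₀, hadamardBasis.repr u h₀ ≠ 0 := by
    by_contra! h
    exact hu0 (hadamardBasis.repr.map_eq_zero_iff.1 (Finsupp.ext h))
  have hmem₀ : hadamardVec h₀ ∈ U := (U.smul_mem_iff hh₀).1 <|
    repr_smul_hadamardVec_mem (fun w => hgen _ (LieSubalgebra.subset_lieSpan (Or.inl ⟨w, rfl⟩)))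
      hu h₀
  have hpar₀ : parity h₀ = c := by
    by_contra hne
    exact linearIndependent_hadamardVec.notMem_span_image hne (hle hmem₀)
  have hflip : ∀ a b, ∀ h ∈ {h | hadamardVec h ∈ U},
      h ∆ siteIndicator a ∆ siteIndicator b ∈ {h | hadamardVec h ∈ U} := by
    refine fun a b => symmDiff_siteIndicator_mem_of_walk (fun a b hab h hh => ?_)
      (hconn.preconnected a b).some
    simpa only [Set.mem_ofPred_eq, pauliZ_mul_pauliZ_hadamardVec] using
      hgen _ (LieSubalgebra.subset_lieSpan (Or.inr ⟨b, a, hab.symm, rfl⟩)) _ hh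
  rw [paritySubspace, Submodule.span_le]
  rintro _ ⟨h, hh, rfl⟩
  exact mem_of_parity_eq_of_symmDiff_pair_mem hflip hmem₀ (hh.trans hpar₀.symm)

end Irreducibility

theorem stmt15_general (n : ℕ) (Γ : SimpleGraph (Fin n)) (hconn : Γ.Connected) :
    (Weven n ⊓ Wodd n = ⊥ ∧ Weven n ⊔ Wodd n = ⊤) ∧
    (Module.finrank ℂ ↥(Weven n) = 2 ^ (n - 1) ∧ Module.finrank ℂ ↥(Wodd n) = 2 ^ (n - 1)) ∧
    (∀ A ∈ gfree Γ, (∀ x ∈ Weven n, A x ∈ Weven n) ∧ (∀ x ∈ Wodd n, A x ∈ Wodd n)) ∧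
    ((∀ U : Submodule ℂ (QState (Fin n)), U ≤ Weven n →
        (∀ A ∈ gfree Γ, ∀ x ∈ U, A x ∈ U) → U = ⊥ ∨ U = Weven n) ∧
     (∀ U : Submodule ℂ (QState (Fin n)), U ≤ Wodd n →
        (∀ A ∈ gfree Γ, ∀ x ∈ U, A x ∈ U) → U = ⊥ ∨ U = Wodd n)) := by
  have := hconn.nonempty
  rw [Weven_eq_paritySubspace, Wodd_eq_paritySubspace]
  refine ⟨⟨isCompl_paritySubspace.inf_eq_bot, isCompl_paritySubspace.sup_eq_top⟩,
    ?_, fun A hA => ⟨gfree_le_lieStabilizer_paritySubspace Γ 0 hA,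
      gfree_le_lieStabilizer_paritySubspace Γ 1 hA⟩,
    fun U => paritySubspace_eq_bot_or_eq hconn, fun U => paritySubspace_eq_bot_or_eq hconn⟩
  simp only [finrank_paritySubspace, Fintype.card_fin, and_self]

/-- For a connected graph: `W = W_even ⊕ W_odd`, both summands have dimension
`2^{n-1}`, both are invariant under the free DLA, and both are irreducible. -/
theorem stmt15 (n : ℕ) (hn : 1 ≤ n) (Γ : SimpleGraph (Fin n)) (hconn : Γ.Connected) :
    (Weven n ⊓ Wodd n = ⊥ ∧ Weven n ⊔ Wodd n = ⊤) ∧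
    (Module.finrank ℂ ↥(Weven n) = 2 ^ (n - 1) ∧ Module.finrank ℂ ↥(Wodd n) = 2 ^ (n - 1)) ∧
    (∀ A ∈ gfree Γ, (∀ x ∈ Weven n, A x ∈ Weven n) ∧ (∀ x ∈ Wodd n, A x ∈ Wodd n)) ∧
    ((∀ U : Submodule ℂ (QState (Fin n)), U ≤ Weven n →
        (∀ A ∈ gfree Γ, ∀ x ∈ U, A x ∈ U) → U = ⊥ ∨ U = Weven n) ∧
     (∀ U : Submodule ℂ (QState (Fin n)), U ≤ Wodd n →
        (∀ A ∈ gfree Γ, ∀ x ∈ U, A x ∈ U) → U = ⊥ ∨ U = Wodd n)) :=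
  stmt15_general n Γ hconn
end
end

section
/- Let Γ be a connected finite simple graph on V = {1,…,n} and v ∈ V a vertex. Then the reduced space W_v is an irreducible representation of the free reduced DLA: every complex subspace U ⊆ W_v satisfying A(U) ⊆ U for all A ∈ g^v_{Γ,free} equals {0} or W_v. -/
open scoped Classical

attribute [local instance 100] LieRing.ofAssociativeRing

noncomputable section

/-!
Once every `Z_w` (w ≠ v) is known to preserve `U`, irreducibility is the familiar fact that the
Pauli operators act irreducibly: products of the projections `(1 ± Z_w)/2` cut any nonzero vector
of `U` down to a multiple of a basis vector `|b⟩`, and the flips `X_w` carry `|b⟩` to every other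
basis vector. The single-site `Z_w` come from connectivity: along a path `w = u₀, u₁, …, u_k = v`
one has `Z_{u_i} = Z_{u_{i+1}} · (Z_{u_i} Z_{u_{i+1}})` because `Z² = 1`, and the last step is a
generator `Z_{u_{k-1}}` since `u_{k-1}` is a neighbour of `v`.
-/

namespace Module.End

lemma mem_invtSubmodule_of_smul {K M : Type*} [Field K] [AddCommGroup M] [Module K M]
    {f : End K M} {p : Submodule K M} {c : K} (hc : c ≠ 0) (h : p ∈ (c • f).invtSubmodule) :
    p ∈ f.invtSubmodule := by
  rwa [← invtSubmodule_smul f (Units.mk0 c hc)]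

end Module.End

section Pauli

variable {S : Type*}

@[simp]
lemma pauliZ_apply (w : S) (g : QState S) (b : S → Bool) :
    pauliZ w g b = (if b w then -1 else 1) * g b :=
  rfl

@[simp]
lemma pauliX_apply [DecidableEq S] (w : S) (g : QState S) (b : S → Bool) :
    pauliX w g b = g (Function.update b w !(b w)) :=
  rfl

lemma pauliZ_mul_self (w : S) : pauliZ w * pauliZ w = 1 := by
  refine LinearMap.ext fun g => funext fun b => ?_
  simp only [Module.End.mul_apply, pauliZ_apply, Module.End.one_apply]
  split_ifs <;> ring

lemma ket_eq_single [Fintype S] [DecidableEq S] (b : S → Bool) : ket b = Pi.single b 1 := by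
  funext x
  simp [ket, Pi.single_apply]

lemma pauliX_ket [Fintype S] [DecidableEq S] (w : S) (b : S → Bool) :
    pauliX w (ket b) = ket (Function.update b w !(b w)) := by
  funext x
  have flip_eq_iff : Function.update x w (!x w) = b ↔ x = Function.update b w (!b w) := by
    constructor <;> rintro rfl <;> simp [Function.update_idem]
  simp only [pauliX_apply, ket, flip_eq_iff]

lemma restrict_eq_smul_add_pauliZ (w : S) (β : Bool) (g : QState S) :
    (fun x => if x w = β then g x else 0)
      = (2⁻¹ : ℂ) • (g + (if β then -1 else 1 : ℂ) • pauliZ w g) := by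
  funext x
  cases hx : x w <;> cases β <;> simp [hx] <;> ring

variable [Fintype S] [DecidableEq S] {U : Submodule ℂ (QState S)}

lemma restrict_mem_of_forall_pauliZ (hZ : ∀ w, U ∈ (pauliZ w).invtSubmodule) {g : QState S}
    (hg : g ∈ U) (b : S → Bool) (T : Finset S) :
    (fun x => if ∀ w ∈ T, x w = b w then g x else 0) ∈ U := by
  induction T using Finset.induction_on with
  | empty => simpa using hg
  | @insert a T _ ih =>
    set gT : QState S := fun x => if ∀ w ∈ T, x w = b w then g x else 0
    have h : (fun x => if ∀ w ∈ insert a T, x w = b w then g x else 0)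
        = fun x => if x a = b a then gT x else 0 := by
      funext x
      simp only [Finset.forall_mem_insert, gT, ite_and]
    rw [h, restrict_eq_smul_add_pauliZ]
    exact U.smul_mem _ (U.add_mem ih (U.smul_mem _ (hZ a ih)))

lemma ket_mem_of_forall_pauliZ (hZ : ∀ w, U ∈ (pauliZ w).invtSubmodule) {g : QState S}
    (hg : g ∈ U) {b : S → Bool} (hb : g b ≠ 0) : ket b ∈ U := by
  have h := restrict_mem_of_forall_pauliZ hZ hg b Finset.univ
  have h_eq : (fun x => if ∀ w ∈ Finset.univ, x w = b w then g x else 0) = g b • ket b := by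
    funext x
    by_cases hx : x = b
    · simp [hx, ket]
    · simp [ket, hx, ← funext_iff]
  rw [h_eq] at h
  simpa [hb] using U.smul_mem (g b)⁻¹ h

lemma ket_update_mem (hX : ∀ w, U ∈ (pauliX w).invtSubmodule) {b : S → Bool} (h : ket b ∈ U)
    (w : S) (β : Bool) : ket (Function.update b w β) ∈ U := by
  by_cases hβ : β = b w
  · simpa [hβ] using h
  · obtain rfl : β = !(b w) := Bool.eq_not_iff.mpr hβ
    rw [← pauliX_ket]
    exact hX w h

lemma ket_mem_of_forall_pauliX (hX : ∀ w, U ∈ (pauliX w).invtSubmodule) {b₀ : S → Bool}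
    (h : ket b₀ ∈ U) (b : S → Bool) : ket b ∈ U := by
  suffices ∀ T : Finset S, ket (T.piecewise b b₀) ∈ U by
    simpa using this Finset.univ
  intro T
  induction T using Finset.induction_on with
  | empty => simpa using h
  | @insert a T _ ih =>
    rw [Finset.piecewise_insert]
    exact ket_update_mem hX ih a (b a)

theorem eq_bot_or_eq_top_of_forall_pauliX_pauliZ (hX : ∀ w, U ∈ (pauliX w).invtSubmodule)
    (hZ : ∀ w, U ∈ (pauliZ w).invtSubmodule) : U = ⊥ ∨ U = ⊤ := by
  refine or_iff_not_imp_left.mpr fun hU => ?_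
  obtain ⟨g, hg, hg0⟩ := (Submodule.ne_bot_iff U).mp hU
  obtain ⟨b, hb⟩ := Function.ne_iff.mp hg0
  have hket := ket_mem_of_forall_pauliX hX (ket_mem_of_forall_pauliZ hZ hg hb)
  rw [eq_top_iff, ← (Pi.basisFun ℂ (S → Bool)).span_eq, Submodule.span_le]
  rintro _ ⟨b', rfl⟩
  simpa [ket_eq_single] using hket b'

end Pauli

section Reduced

variable {V : Type*} [DecidableEq V] {v : V}
  {U : Submodule ℂ (QState {w : V // w ≠ v})}

lemma pauliZsub_mul_self {a : V} (ha : a ≠ v) : pauliZsub v a * pauliZsub v a = 1 := by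
  simp only [pauliZsub, dif_neg ha, pauliZ_mul_self]

lemma pauliZsub_mem_invtSubmodule_of_reachable [Fintype V] (Γ : SimpleGraph V)
    (hZZ : ∀ a b, Γ.Adj a b → a ≠ v → b ≠ v →
      U ∈ (pauliZsub v a * pauliZsub v b).invtSubmodule)
    (hZ : ∀ a, Γ.Adj v a → U ∈ (pauliZsub v a).invtSubmodule) {w : V} (hw : Γ.Reachable w v) :
    U ∈ (pauliZsub v w).invtSubmodule := by
  have hv : U ∈ (pauliZsub v v).invtSubmodule := by
    simp [pauliZsub]
  rw [SimpleGraph.reachable_iff_reflTransGen] at hw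
  induction hw using Relation.ReflTransGen.head_induction_on with
  | refl => exact hv
  | @head a c hac _ ih =>
    by_cases ha : a = v
    · exact ha ▸ hv
    by_cases hc : c = v
    · exact hZ a (hc ▸ hac.symm)
    have h : pauliZsub v a = pauliZsub v c * (pauliZsub v a * pauliZsub v c) := by
      rw [pauliZsub_mul_comm v a c, ← mul_assoc, pauliZsub_mul_self hc, one_mul]
    rw [h]
    exact Module.End.invtSubmodule.comp _ ih (hZZ a c hac ha hc)

end Reduced

theorem stmt16_general (n : ℕ) (Γ : SimpleGraph (Fin n)) (hconn : Γ.Connected)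
    (v : Fin n) :
    ∀ U : Submodule ℂ (QState {w : Fin n // w ≠ v}),
      (∀ A ∈ gfreeRed Γ v, ∀ x ∈ U, A x ∈ U) → U = ⊥ ∨ U = ⊤ := by
  intro U hU
  have of_generator : ∀ A, Complex.I • A ∈ gfreeRed Γ v → U ∈ A.invtSubmodule := fun A hA =>
    Module.End.mem_invtSubmodule_of_smul Complex.I_ne_zero (hU _ hA)
  have hZ : ∀ w, U ∈ (pauliZsub v w).invtSubmodule := fun w =>
    pauliZsub_mem_invtSubmodule_of_reachable Γ
      (fun a b hab ha hb => of_generator _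
        (LieSubalgebra.subset_lieSpan (Or.inl (Or.inr ⟨a, b, hab, ha, hb, rfl⟩))))
      (fun a ha => of_generator _ (LieSubalgebra.subset_lieSpan (Or.inr ⟨a, ha, rfl⟩)))
      (hconn w v)
  refine eq_bot_or_eq_top_of_forall_pauliX_pauliZ
    (fun w => of_generator _ (LieSubalgebra.subset_lieSpan (Or.inl (Or.inl ⟨w, rfl⟩))))
    fun w => ?_
  simpa [pauliZsub, w.2] using hZ w

/-- For a connected graph, the reduced space `W_v` is an irreducible
representation of the free reduced DLA `g^v_{Γ,free}`. -/
theorem stmt16 (n : ℕ) (hn : 1 ≤ n) (Γ : SimpleGraph (Fin n)) (hconn : Γ.Connected)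
    (v : Fin n) :
    ∀ U : Submodule ℂ (QState {w : Fin n // w ≠ v}),
      (∀ A ∈ gfreeRed Γ v, ∀ x ∈ U, A x ∈ U) → U = ⊥ ∨ U = ⊤ :=
  stmt16_general n Γ hconn v
end
end
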